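/- Let 𝔥_1^λ be the 3-dimensional restricted Heisenberg Lie algebra over an algebraically closed field F of characteristic p > 2, with e_i^{[p]} = λ_i e_3 for the basis e_1, e_2, e_3, [e_1,e_2] = e_3. Then 𝔥_1^λ is isomorphic as a restricted Lie algebra to exactly one of the algebras given by λ = (0,0,0), λ = (1,0,0), or λ = (0,0,1); in particular there are exactly 3 isomorphism classes. -/

import Mathlib

open Finset Polynomial

/-- The Heisenberg Lie bracket on `F^(2m+1)`: `[e_i, e_{m+i}] = e_{2m}` (0-indexed),
with `e_{2m}` (the last basis vector) playing the role of the central element `e_{2m+1}`. -/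
def hBr (F : Type*) [Field F] (m : ℕ) (g h : Fin (2*m+1) → F) : Fin (2*m+1) → F :=
  Pi.single (Fin.last (2*m))
    (∑ i : Fin m,
      (g ⟨i.1, by have := i.2; omega⟩ * h ⟨m + i.1, by have := i.2; omega⟩
        - g ⟨m + i.1, by have := i.2; omega⟩ * h ⟨i.1, by have := i.2; omega⟩))

/-- The central basis vector `e_{2m+1}` of the Heisenberg algebra. -/
def eC (F : Type*) [Field F] (m : ℕ) : Fin (2*m+1) → F := Pi.single (Fin.last (2*m)) 1

/-- Extension of a bilinear bracket on `F^n` to `(Polynomial F)^n` via structure constants. -/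
noncomputable def brP (F : Type*) [Field F] (n : ℕ)
    (br : (Fin n → F) → (Fin n → F) → (Fin n → F))
    (x y : Fin n → Polynomial F) : Fin n → Polynomial F :=
  fun k => ∑ i : Fin n, ∑ j : Fin n,
    x i * y j * Polynomial.C (br (Pi.single i 1) (Pi.single j 1) k)

/-- `(ad (t g + h))^(p-1) (g)` computed with polynomial coefficients in `t`. -/
noncomputable def adP (F : Type*) [Field F] (n p : ℕ)
    (br : (Fin n → F) → (Fin n → F) → (Fin n → F)) (g h : Fin n → F) :
    Fin n → Polynomial F :=
  (fun z => brP F n br ((Polynomial.X : Polynomial F) • (fun j => Polynomial.C (g j))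
      + (fun j => Polynomial.C (h j))) z)^[p-1] (fun j => Polynomial.C (g j))

/-- The total correction term `Σ_{i=1}^{p-1} s_i(g,h)`, where `i·s_i(g,h)` is the coefficient
of `t^{i-1}` in `(ad (t g + h))^{p-1}(g)`. -/
noncomputable def sSum (F : Type*) [Field F] (n p : ℕ)
    (br : (Fin n → F) → (Fin n → F) → (Fin n → F)) (g h : Fin n → F) : Fin n → F :=
  ∑ i ∈ Finset.range (p-1),
    (((i+1 : ℕ) : F))⁻¹ • (fun k => (adP F n p br g h k).coeff i)

/-- The three axioms of a `[p]`-operator on the Lie algebra `(F^n, br)`. -/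
def IsPMap (F : Type*) [Field F] (n p : ℕ)
    (br : (Fin n → F) → (Fin n → F) → (Fin n → F))
    (pmap : (Fin n → F) → (Fin n → F)) : Prop :=
  (∀ (a : F) (g : Fin n → F), pmap (a • g) = a ^ p • pmap g) ∧
  (∀ g h, pmap (g + h) = pmap g + pmap h + sSum F n p br g h) ∧
  (∀ g h, br (pmap g) h = (fun x => br g x)^[p] h)

/-- The `[p]`-operator on `𝔥_m` (for `p > 2`) determined by the linear form `λ`:
`(Σ a_i e_i)^{[p]} = (Σ a_i^p λ_i) e_{2m+1}`. -/
def pLam (F : Type*) [Field F] (p m : ℕ) (lam : Fin (2*m+1) → F)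
    (g : Fin (2*m+1) → F) : Fin (2*m+1) → F :=
  (∑ i, (g i) ^ p * lam i) • eC F m

/-- Restricted Lie algebra isomorphism of `𝔥_1^λ` and `𝔥_1^{λ'}` (`p > 2`, where the
`[p]`-operator determined by `λ` is `g ↦ (Σ g_i^p λ_i) e_3`). -/
def H1RestrictedIso (F : Type*) [Field F] (p : ℕ) (lam lam' : Fin (2*1+1) → F) : Prop :=
  ∃ Ψ : (Fin (2*1+1) → F) ≃ₗ[F] (Fin (2*1+1) → F),
    (∀ g h, Ψ (hBr F 1 g h) = hBr F 1 (Ψ g) (Ψ h)) ∧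
    (∀ g, Ψ (pLam F p 1 lam g) = pLam F p 1 lam' (Ψ g))

/-!
A Lie automorphism of `𝔥₁` has matrix `[[A, 0], [kᵀ, μ]]` with `μ = det A`, and it carries the
`[p]`-structure `λ` to `λ'` as soon as `μ (λ₁, λ₂) = (A^{(p)})ᵀ (λ'₁, λ'₂) + λ'₃ k^{(p)}` and
`μ λ₃ = μ^p λ'₃`, because `g ↦ g^p` is additive. Over an algebraically closed field, `p`-th roots
bring `λ` with `λ₃ = 0` to `0` or `e₁^*`, and a `(p-1)`-th root `μ` of `λ₃ ≠ 0` (with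
`k^{(p)} = μ (λ₁, λ₂)`) brings it to `e₃^*`. The three are told apart by two invariants: whether
the `[p]`-map vanishes, and whether it vanishes on the centre `F e₃ = [𝔥₁, 𝔥₁]`, which every
automorphism preserves.
-/

open scoped Matrix

section

variable {F : Type*} [Field F] {p : ℕ}

theorem pLam_eq_single (m : ℕ) (lam g : Fin (2*m+1) → F) :
    pLam F p m lam g = Pi.single (Fin.last (2*m)) (∑ i, g i ^ p * lam i) := by
  rw [pLam, eC, ← Pi.single_smul', smul_eq_mul, mul_one]

theorem pLam_single (hp : p ≠ 0) (m : ℕ) (lam : Fin (2*m+1) → F) (i : Fin (2*m+1)) (c : F) :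
    pLam F p m lam (Pi.single i c) = (c ^ p * lam i) • eC F m := by
  rw [pLam, Finset.sum_eq_single i (fun j _ hj => by simp [hj, zero_pow hp]) (by simp),
    Pi.single_eq_same]

theorem hBr_one_eq_single (g h : Fin (2*1+1) → F) :
    hBr F 1 g h = Pi.single (Fin.last (2*1)) (g 0 * h 1 - g 1 * h 0) := by
  simp [hBr]

theorem hBr_single_zero_single_one :
    hBr F 1 (Pi.single 0 1) (Pi.single 1 1) = eC F 1 := by
  simp [hBr_one_eq_single, eC]

theorem H1RestrictedIso.refl (lam : Fin (2*1+1) → F) : H1RestrictedIso F p lam lam :=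
  ⟨LinearEquiv.refl F _, fun _ _ => rfl, fun _ => rfl⟩

theorem H1RestrictedIso.eq_zero_of_left_eq_zero (hp : p ≠ 0) {lam' : Fin (2*1+1) → F}
    (h : H1RestrictedIso F p 0 lam') : lam' = 0 := by
  obtain ⟨Ψ, -, hΨ⟩ := h
  funext i
  have := hΨ (Ψ.symm (Pi.single i 1))
  rw [LinearEquiv.apply_symm_apply, pLam_single hp] at this
  simpa [pLam, eC] using (congrFun this (Fin.last 2)).symm

theorem H1RestrictedIso.apply_two_eq_zero (hp : p ≠ 0) {lam lam' : Fin (2*1+1) → F}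
    (h : H1RestrictedIso F p lam lam') (h2 : lam 2 = 0) : lam' 2 = 0 := by
  obtain ⟨Ψ, hΨbr, hΨp⟩ := h
  obtain ⟨c, hc⟩ : ∃ c, Ψ (eC F 1) = Pi.single (Fin.last 2) c :=
    ⟨_, by rw [← hBr_single_zero_single_one, hΨbr, hBr_one_eq_single]⟩
  have hc0 : c ≠ 0 := by
    rintro rfl
    rw [Pi.single_zero, LinearEquiv.map_eq_zero_iff] at hc
    simpa [eC] using congrFun hc (Fin.last 2)
  have hpe : pLam F p 1 lam (eC F 1) = 0 := by
    rw [eC, pLam_single hp]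
    simp [h2]
  have := hΨp (eC F 1)
  rw [hpe, map_zero, hc, pLam_single hp] at this
  simpa [hc0, hp, eC] using congrFun this (Fin.last 2)

def h1AutMatrix (a b c d x y μ : F) : Matrix (Fin 3) (Fin 3) F :=
  !![a, b, 0; c, d, 0; x, y, μ]

theorem det_h1AutMatrix (a b c d x y μ : F) :
    (h1AutMatrix a b c d x y μ).det = (a * d - b * c) * μ := by
  simp only [h1AutMatrix, Matrix.det_fin_three, Matrix.of_apply, Matrix.cons_val',
    Matrix.cons_val_zero, Matrix.cons_val_one, Matrix.cons_val_fin_one, Matrix.cons_val]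
  ring

theorem h1AutMatrix_mulVec (a b c d x y μ : F) (g : Fin (2*1+1) → F) :
    h1AutMatrix a b c d x y μ *ᵥ g =
      ![a * g 0 + b * g 1, c * g 0 + d * g 1, x * g 0 + y * g 1 + μ * g 2] := by
  funext k
  fin_cases k <;> simp [h1AutMatrix, Matrix.mulVec, dotProduct, Fin.sum_univ_three]

theorem h1AutMatrix_mulVec_single_last (a b c d x y μ v : F) :
    h1AutMatrix a b c d x y μ *ᵥ Pi.single (Fin.last (2*1)) v =
      Pi.single (Fin.last (2*1)) (μ * v) := by
  rw [h1AutMatrix_mulVec]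
  funext k
  fin_cases k <;> simp

theorem h1AutMatrix_mulVec_hBr {a b c d x y μ : F} (hdet : a * d - b * c = μ)
    (g h : Fin (2*1+1) → F) :
    h1AutMatrix a b c d x y μ *ᵥ hBr F 1 g h =
      hBr F 1 (h1AutMatrix a b c d x y μ *ᵥ g) (h1AutMatrix a b c d x y μ *ᵥ h) := by
  rw [hBr_one_eq_single, h1AutMatrix_mulVec_single_last, hBr_one_eq_single, h1AutMatrix_mulVec,
    h1AutMatrix_mulVec]
  congr 1
  simp only [Matrix.cons_val_zero, Matrix.cons_val_one]
  linear_combination -(g 0 * h 1 - g 1 * h 0) * hdet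

theorem h1AutMatrix_mulVec_pLam [ExpChar F p] {lam lam' : Fin (2*1+1) → F} {a b c d x y μ : F}
    (h0 : μ * lam 0 = a ^ p * lam' 0 + c ^ p * lam' 1 + x ^ p * lam' 2)
    (h1 : μ * lam 1 = b ^ p * lam' 0 + d ^ p * lam' 1 + y ^ p * lam' 2)
    (h2 : μ * lam 2 = μ ^ p * lam' 2) (g : Fin (2*1+1) → F) :
    h1AutMatrix a b c d x y μ *ᵥ pLam F p 1 lam g =
      pLam F p 1 lam' (h1AutMatrix a b c d x y μ *ᵥ g) := by
  rw [pLam_eq_single, h1AutMatrix_mulVec_single_last, pLam_eq_single, h1AutMatrix_mulVec]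
  congr 1
  simp only [Nat.reduceMul, Nat.reduceAdd, Fin.sum_univ_three, Matrix.cons_val_zero,
    Matrix.cons_val_one, Matrix.cons_val_two, Matrix.tail_cons, Matrix.head_cons, add_pow_expChar,
    mul_pow]
  linear_combination g 0 ^ p * h0 + g 1 ^ p * h1 + g 2 ^ p * h2

theorem H1RestrictedIso.of_h1AutMatrix [ExpChar F p] {lam lam' : Fin (2*1+1) → F}
    {a b c d x y μ : F} (hdet : a * d - b * c = μ) (hμ : μ ≠ 0)
    (h0 : μ * lam 0 = a ^ p * lam' 0 + c ^ p * lam' 1 + x ^ p * lam' 2)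
    (h1 : μ * lam 1 = b ^ p * lam' 0 + d ^ p * lam' 1 + y ^ p * lam' 2)
    (h2 : μ * lam 2 = μ ^ p * lam' 2) : H1RestrictedIso F p lam lam' := by
  have hunit : IsUnit (h1AutMatrix a b c d x y μ).det := by
    rw [det_h1AutMatrix, hdet]
    exact (mul_ne_zero hμ hμ).isUnit
  exact ⟨Matrix.toLinearEquiv' _ (Matrix.invertibleOfIsUnitDet _ hunit),
    h1AutMatrix_mulVec_hBr hdet, h1AutMatrix_mulVec_pLam h0 h1 h2⟩

theorem exists_mul_sub_mul_eq_one {a b : F} (h : a ≠ 0 ∨ b ≠ 0) :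
    ∃ c d, a * d - b * c = 1 := by
  rcases h with ha | hb
  · exact ⟨0, a⁻¹, by simp [ha]⟩
  · exact ⟨-b⁻¹, 0, by simp [hb]⟩

theorem h1RestrictedIso_single_zero [IsAlgClosed F] [ExpChar F p] {lam : Fin (2*1+1) → F}
    (h2 : lam 2 = 0) (h01 : lam 0 ≠ 0 ∨ lam 1 ≠ 0) :
    H1RestrictedIso F p lam (Pi.single 0 1) := by
  have hp := expChar_pos F p
  obtain ⟨a, ha⟩ := IsAlgClosed.exists_pow_nat_eq (lam 0) hp
  obtain ⟨b, hb⟩ := IsAlgClosed.exists_pow_nat_eq (lam 1) hp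
  obtain ⟨c, d, hdet⟩ := exists_mul_sub_mul_eq_one <|
    h01.imp (fun h => (pow_ne_zero_iff hp.ne').mp (ha ▸ h))
      (fun h => (pow_ne_zero_iff hp.ne').mp (hb ▸ h))
  refine H1RestrictedIso.of_h1AutMatrix (x := 0) (y := 0) hdet one_ne_zero ?_ ?_ ?_ <;>
    simp [ha, hb, h2]

theorem h1RestrictedIso_single_last [IsAlgClosed F] [ExpChar F p] (hp : 1 < p)
    {lam : Fin (2*1+1) → F} (h2 : lam 2 ≠ 0) :
    H1RestrictedIso F p lam (Pi.single (Fin.last (2*1)) 1) := by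
  have hp1 : 0 < p - 1 := Nat.sub_pos_of_lt hp
  obtain ⟨μ, hμ⟩ := IsAlgClosed.exists_pow_nat_eq (lam 2) hp1
  have hμ0 : μ ≠ 0 := (pow_ne_zero_iff hp1.ne').mp (hμ ▸ h2)
  obtain ⟨x, hx⟩ := IsAlgClosed.exists_pow_nat_eq (μ * lam 0) (expChar_pos F p)
  obtain ⟨y, hy⟩ := IsAlgClosed.exists_pow_nat_eq (μ * lam 1) (expChar_pos F p)
  refine H1RestrictedIso.of_h1AutMatrix (b := 0) (c := 0) (d := 1) (x := x) (y := y) (by ring) hμ0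
    ?_ ?_ ?_
  · simp [hx, zero_pow (expChar_ne_zero F p)]
  · simp [hy, zero_pow (expChar_ne_zero F p)]
  · rw [← Nat.sub_add_cancel hp.le, pow_succ, hμ]
    simp [mul_comm]

end

theorem heisenberg3_classification_general (F : Type*) [Field F] [IsAlgClosed F] (p : ℕ)
    [Fact p.Prime] [CharP F p] (lam : Fin (2*1+1) → F) :
    (H1RestrictedIso F p lam 0 ∨
      H1RestrictedIso F p lam (Pi.single (0 : Fin (2*1+1)) 1) ∨
      H1RestrictedIso F p lam (Pi.single (Fin.last (2*1)) 1)) ∧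
    ¬ H1RestrictedIso F p (0 : Fin (2*1+1) → F) (Pi.single (0 : Fin (2*1+1)) 1) ∧
    ¬ H1RestrictedIso F p (0 : Fin (2*1+1) → F) (Pi.single (Fin.last (2*1)) 1) ∧
    ¬ H1RestrictedIso F p (Pi.single (0 : Fin (2*1+1)) 1) (Pi.single (Fin.last (2*1)) 1) := by
  have hp : p.Prime := Fact.out
  refine ⟨?_, fun h => ?_, fun h => ?_, fun h => ?_⟩
  · by_cases h2 : lam 2 = 0
    · by_cases h01 : lam 0 = 0 ∧ lam 1 = 0
      · have hlam : lam = 0 := by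
          funext i
          fin_cases i <;> simp [h01, h2]
        exact .inl (hlam ▸ .refl _)
      · exact .inr (.inl (h1RestrictedIso_single_zero h2 (not_and_or.mp h01)))
    · exact .inr (.inr (h1RestrictedIso_single_last hp.one_lt h2))
  · simpa using congrFun (h.eq_zero_of_left_eq_zero hp.ne_zero) 0
  · simpa using congrFun (h.eq_zero_of_left_eq_zero hp.ne_zero) (Fin.last 2)
  · simpa using h.apply_two_eq_zero hp.ne_zero (by simp)

/-- over an algebraically closed field of characteristic `p > 2`, every
restricted structure `λ` on the 3-dimensional Heisenberg algebra `𝔥_1` is isomorphic to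
exactly one of `λ = 0`, `λ = e_1^*`, `λ = e_3^*`: there are exactly 3 isomorphism classes. -/
theorem heisenberg3_classification (F : Type*) [Field F] [IsAlgClosed F] (p : ℕ)
    [Fact p.Prime] [CharP F p] (hp : 2 < p) (lam : Fin (2*1+1) → F) :
    (H1RestrictedIso F p lam 0 ∨
      H1RestrictedIso F p lam (Pi.single (0 : Fin (2*1+1)) 1) ∨
      H1RestrictedIso F p lam (Pi.single (Fin.last (2*1)) 1)) ∧
    ¬ H1RestrictedIso F p (0 : Fin (2*1+1) → F) (Pi.single (0 : Fin (2*1+1)) 1) ∧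
    ¬ H1RestrictedIso F p (0 : Fin (2*1+1) → F) (Pi.single (Fin.last (2*1)) 1) ∧
    ¬ H1RestrictedIso F p (Pi.single (0 : Fin (2*1+1)) 1) (Pi.single (Fin.last (2*1)) 1) :=
  heisenberg3_classification_general F p lam
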